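/- arXiv:1206.6638 — 6 statements merged into one kernel-verified Lean document; each statement's English description precedes it below -/
import Mathlib

section
/- A perfect profinite group is topologically normally generated by a single element: there exists g ∈ G such that the smallest closed normal subgroup of G containing g equals G. -/
/-!
A finite perfect group `Q` has a normal generator, by induction on `|Q|`. Take a minimal
normal subgroup `N` and lift a normal generator of `Q ⧸ N` to `g`. Either `A = ⟨⟨g⟩⟩` is all
of `Q`, or `A ∩ N = 1` and `AN = Q`; a normal generator of `Q ⧸ A` lifts to some `b ∈ N`, and
`gb` normally generates `Q`: modulo `⟨⟨gb⟩⟩` the image of `g` commutes with both `A` and `N`,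
and a perfect group normally generated by a central element is trivial.

For the profinite group `G`, every `G ⧸ U` with `U` open normal is finite and perfect, so the
closed sets `{g | U ⟨⟨g⟩⟩ = G}` are nonempty; they are directed, so by compactness some `g`
lies in all of them, and then `⟨⟨g⟩⟩` meets every coset of every open normal subgroup.
-/

open Subgroup Group

namespace QuotientGroup

variable {G : Type*} [Group G] (N : Subgroup G) [N.Normal]

theorem map_mk'_eq_top_iff (H : Subgroup G) : H.map (mk' N) = ⊤ ↔ N ⊔ H = ⊤ := by
  rw [← (comap_injective (mk'_surjective N)).eq_iff, comap_map_mk', comap_top]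

theorem normalClosure_mk_eq_top_iff (g : G) :
    normalClosure {(g : G ⧸ N)} = ⊤ ↔ N ⊔ normalClosure {g} = ⊤ := by
  rw [← map_mk'_eq_top_iff, map_normalClosure _ _ (mk'_surjective N), Set.image_singleton]
  rfl

end QuotientGroup

open QuotientGroup

theorem Subgroup.card_quotient_lt_card {Q : Type*} [Group Q] [Finite Q] {N : Subgroup Q}
    (hN : N ≠ ⊥) : Nat.card (Q ⧸ N) < Nat.card Q := by
  rw [card_eq_card_quotient_mul_card_subgroup N]
  exact lt_mul_of_one_lt_right Nat.card_pos ((one_lt_card_iff_ne_bot N).mpr hN)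

theorem Subgroup.disjoint_of_minimal_normal {Q : Type*} [Group Q] {N K : Subgroup Q}
    (hN : Minimal (fun N : Subgroup Q => N.Normal ∧ N ≠ ⊥) N) [K.Normal] (hK : ¬N ≤ K) :
    Disjoint K N := by
  have := hN.prop.1
  rw [disjoint_iff]
  by_contra hKN
  exact hK (hN.eq_of_le ⟨normal_inf_normal K N, hKN⟩ inf_le_right ▸ inf_le_left)

namespace Group.IsPerfect

variable {P : Type*} [Group P] [IsPerfect P]

theorem subsingleton_of_mem_center_of_normalClosure_eq_top {x : P} (hx : x ∈ center P)
    (h : normalClosure {x} = ⊤) : Subsingleton P := by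
  have : IsMulCommutative P := center_eq_top_iff.mp <| top_le_iff.mp <|
    h ▸ normalClosure_le_normal (Set.singleton_subset_iff.mpr hx)
  infer_instance

theorem normalClosure_mul_eq_top {a b : P} (hsup : normalClosure {a} ⊔ normalClosure {b} = ⊤)
    (hdisj : Disjoint (normalClosure {a}) (normalClosure {b})) : normalClosure {a * b} = ⊤ := by
  set R := normalClosure {a * b}
  have hcomm := commute_of_normal_of_disjoint _ _ normalClosure_normal normalClosure_normal hdisj
  have hba : (b : P ⧸ R) = (a : P ⧸ R)⁻¹ :=
    eq_inv_of_mul_eq_one_right ((eq_one_iff (a * b)).mpr (subset_normalClosure rfl))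
  have hcentral : (a : P ⧸ R) ∈ center (P ⧸ R) := by
    have hcentralizer : ⊤ ≤ (centralizer {(a : P ⧸ R)}).comap (mk' R) := by
      rw [← hsup, sup_le_iff]
      constructor
      · intro x hx
        have hxb : Commute (x : P ⧸ R) b := (hcomm x b hx (subset_normalClosure rfl)).map (mk' R)
        rw [hba] at hxb
        exact mem_centralizer_singleton_iff.mpr (Commute.inv_right_iff.mp hxb).eq
      · intro x hx
        have hax : Commute (a : P ⧸ R) x := (hcomm a x (subset_normalClosure rfl) hx).map (mk' R)
        exact mem_centralizer_singleton_iff.mpr hax.eq.symm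
    rw [mem_center_iff]
    intro z
    obtain ⟨x, rfl⟩ := mk_surjective z
    exact mem_centralizer_singleton_iff.mp (hcentralizer (mem_top x))
  have hgen : normalClosure {(a : P ⧸ R)} = ⊤ := by
    rw [normalClosure_mk_eq_top_iff, eq_top_iff, ← hsup]
    refine sup_le le_sup_right (normalClosure_le_normal (Set.singleton_subset_iff.mpr ?_))
    rw [← inv_mul_cancel_left a b]
    exact mul_mem (inv_mem (mem_sup_right (subset_normalClosure rfl)))
      (mem_sup_left (subset_normalClosure rfl))
  have := subsingleton_of_mem_center_of_normalClosure_eq_top hcentral hgen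
  exact eq_top_iff' R |>.mpr fun x => (eq_one_iff x).mp (Subsingleton.elim _ _)

theorem exists_normalClosure_singleton_eq_top {Q : Type*} [Group Q] [Finite Q] [IsPerfect Q] :
    ∃ q : Q, normalClosure {q} = ⊤ := by
  induction hn : Nat.card Q using Nat.strong_induction_on generalizing Q with
  | _ n ih =>
  subst hn
  rcases subsingleton_or_nontrivial Q with hQ | hQ
  · exact ⟨1, Subsingleton.elim _ _⟩
  obtain ⟨N, hN⟩ :=
    exists_minimal_of_wellFoundedLT (fun N : Subgroup Q => N.Normal ∧ N ≠ ⊥)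
    ⟨⊤, inferInstance, top_ne_bot⟩
  obtain ⟨hNnormal, hNbot⟩ := hN.prop
  by_cases hNtop : N = ⊤
  · obtain ⟨q, hq⟩ := exists_ne (1 : Q)
    have hqbot : normalClosure {q} ≠ ⊥ := fun h =>
      hq (mem_bot.mp (h ▸ subset_normalClosure rfl))
    exact ⟨q, hNtop ▸ hN.eq_of_le ⟨normalClosure_normal, hqbot⟩ (hNtop ▸ le_top)⟩
  obtain ⟨gbar, hg⟩ := ih _ (card_quotient_lt_card hNbot) (Q := Q ⧸ N) rfl
  obtain ⟨g, rfl⟩ := mk_surjective gbar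
  rw [normalClosure_mk_eq_top_iff] at hg
  set A := normalClosure {g}
  by_cases hAtop : A = ⊤
  · exact ⟨g, hAtop⟩
  have hdisj : Disjoint A N :=
    disjoint_of_minimal_normal hN fun hNA => hAtop (sup_eq_right.mpr hNA ▸ hg)
  have hAbot : A ≠ ⊥ := fun hA => hNtop (by rwa [hA, sup_bot_eq] at hg)
  obtain ⟨bbar, hb⟩ := ih _ (card_quotient_lt_card hAbot) (Q := Q ⧸ A) rfl
  obtain ⟨b, hbN, rfl⟩ : ∃ b ∈ N, (b : Q ⧸ A) = bbar :=
    mem_map.mp (((map_mk'_eq_top_iff A N).mpr (sup_comm N A ▸ hg)) ▸ mem_top bbar)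
  rw [normalClosure_mk_eq_top_iff] at hb
  exact ⟨g * b, normalClosure_mul_eq_top hb
    (hdisj.mono_right (normalClosure_le_normal (Set.singleton_subset_iff.mpr hbN)))⟩

end Group.IsPerfect

section Topological

variable {G : Type*} [Group G] [TopologicalSpace G] [IsTopologicalGroup G]

theorem Subgroup.sup_eq_top_of_isOpen_of_dense {U H : Subgroup G} (hU : IsOpen (U : Set G))
    (hH : Dense (H : Set G)) : U ⊔ H = ⊤ := by
  have hclosed := isClosed_of_isOpen _ (isOpen_mono (le_sup_left : U ≤ U ⊔ H) hU)
  rw [← coe_eq_univ, ← hclosed.closure_eq]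
  exact (hH.mono (SetLike.coe_subset_coe.mpr le_sup_right)).closure_eq

theorem Group.isPerfect_quotient_of_dense_commutator (hG : Dense (commutator G : Set G))
    (U : Subgroup G) [U.Normal] (hU : IsOpen (U : Set G)) : IsPerfect (G ⧸ U) := by
  have hmap : (commutator G).map (mk' U) = commutator (G ⧸ U) := by
    rw [commutator_def, commutator_def, map_commutator, map_top_of_surjective _ (mk'_surjective U)]
  rw [isPerfect_def, ← hmap, map_mk'_eq_top_iff]
  exact sup_eq_top_of_isOpen_of_dense hU hG

theorem isClosed_setOf_sup_normalClosure_eq_top (U : OpenNormalSubgroup G) :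
    IsClosed {g : G | (U : Subgroup G) ⊔ normalClosure {g} = ⊤} := by
  simp_rw [← normalClosure_mk_eq_top_iff]
  exact (isClosed_discrete {q : G ⧸ (U : Subgroup G) | normalClosure {q} = ⊤}).preimage
    continuous_mk

theorem exists_forall_sup_normalClosure_eq_top [CompactSpace G]
    (h : ∀ U : OpenNormalSubgroup G, ∃ q : G ⧸ (U : Subgroup G), normalClosure {q} = ⊤) :
    ∃ g : G, ∀ U : OpenNormalSubgroup G, (U : Subgroup G) ⊔ normalClosure {g} = ⊤ := by
  have : Nonempty (OpenNormalSubgroup G) :=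
    ⟨⟨⊤, inferInstanceAs (⊤ : Subgroup G).Normal⟩⟩
  have hdir : Directed (· ⊇ ·)
      fun U : OpenNormalSubgroup G => {g : G | (U : Subgroup G) ⊔ normalClosure {g} = ⊤} :=
    fun U V => ⟨U ⊓ V, fun _ hg => top_unique (hg ▸ sup_le_sup_right inf_le_left _),
      fun _ hg => top_unique (hg ▸ sup_le_sup_right inf_le_right _)⟩
  have hne (U : OpenNormalSubgroup G) :
      {g : G | (U : Subgroup G) ⊔ normalClosure {g} = ⊤}.Nonempty := by
    obtain ⟨q, hq⟩ := h U
    obtain ⟨g, rfl⟩ := mk_surjective q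
    exact ⟨g, (normalClosure_mk_eq_top_iff _ g).mp hq⟩
  obtain ⟨g, hg⟩ := IsCompact.nonempty_iInter_of_directed_nonempty_isCompact_isClosed _ hdir hne
    (fun U => (isClosed_setOf_sup_normalClosure_eq_top U).isCompact)
    isClosed_setOf_sup_normalClosure_eq_top
  exact ⟨g, fun U => Set.mem_iInter.mp hg U⟩

theorem Subgroup.topologicalClosure_eq_top_of_forall_sup_eq_top [CompactSpace G]
    [TotallyDisconnectedSpace G] {H : Subgroup G}
    (h : ∀ U : OpenNormalSubgroup G, (U : Subgroup G) ⊔ H = ⊤) :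
    H.topologicalClosure = ⊤ := by
  have hsInf := ProfiniteGrp.closedSubgroup_eq_sInf_open
    ⟨H.topologicalClosure, H.isClosed_topologicalClosure⟩
  refine top_unique (le_of_le_of_eq (le_sInf ?_) hsInf.symm)
  rintro N ⟨hNopen, hHN⟩
  obtain ⟨U, hU⟩ := ProfiniteGrp.exist_openNormalSubgroup_sub_open_nhds_of_one hNopen N.one_mem
  exact (h U).ge.trans (sup_le hU (H.le_topologicalClosure.trans hHN))

end Topological

theorem perfect_profinite_normally_generated_general
    {G : Type*} [Group G] [TopologicalSpace G] [IsTopologicalGroup G]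
    [CompactSpace G] [TotallyDisconnectedSpace G]
    (hperf : Dense ((commutator G : Subgroup G) : Set G)) :
    ∃ g : G, (Subgroup.normalClosure {g}).topologicalClosure = ⊤ := by
  obtain ⟨g, hg⟩ := exists_forall_sup_normalClosure_eq_top fun U : OpenNormalSubgroup G =>
    have := isPerfect_quotient_of_dense_commutator hperf U U.isOpen
    IsPerfect.exists_normalClosure_singleton_eq_top
  exact ⟨g, topologicalClosure_eq_top_of_forall_sup_eq_top hg⟩

theorem perfect_profinite_normally_generated
    {G : Type*} [Group G] [TopologicalSpace G] [IsTopologicalGroup G]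
    [CompactSpace G] [T2Space G] [TotallyDisconnectedSpace G]
    (hperf : Dense ((commutator G : Subgroup G) : Set G)) :
    ∃ g : G, (Subgroup.normalClosure {g}).topologicalClosure = ⊤ :=
  perfect_profinite_normally_generated_general hperf
end

section
/- Let G be a perfect topological group (its commutator subgroup is dense) and N a closed normal soluble subgroup of G. If G/N is topologically normally generated by a single element, then so is G. -/
/-!
Let `H` be the closed normal subgroup topologically normally generated by a lift `g` of the
generator of `G ⧸ N`. The quotient `G ⧸ H` is a Hausdorff perfect group in which the image of
`N` is a dense soluble subgroup. Since the commutator of closures lies in the closure of the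
commutator, a dense subgroup of a perfect group has dense derived subgroup; iterating along
the derived series of the image of `N`, which reaches the trivial (closed) subgroup, shows that
`G ⧸ H` is trivial, i.e. `H = G`.
-/

open scoped commutatorElement

open QuotientGroup

namespace Subgroup

variable {G : Type*} [Group G] [TopologicalSpace G] [IsTopologicalGroup G]

theorem dense_iff_topologicalClosure_eq_top {H : Subgroup G} :
    Dense (H : Set G) ↔ H.topologicalClosure = ⊤ := by
  rw [dense_iff_closure_eq, ← topologicalClosure_coe, ← coe_top, SetLike.coe_set_eq]

theorem commutator_topologicalClosure_le (H K : Subgroup G) :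
    ⁅H.topologicalClosure, K.topologicalClosure⁆ ≤ ⁅H, K⁆.topologicalClosure := by
  rw [commutator_le]
  intro p hp q hq
  have hcont : Continuous (Function.uncurry fun x y : G => ⁅x, y⁆) := by
    simp only [commutatorElement_def]
    fun_prop
  exact map_mem_closure₂ hcont hp hq fun a ha b hb => commutator_mem_commutator ha hb

theorem topologicalClosure_commutator_self_eq_top
    (hG : (_root_.commutator G).topologicalClosure = ⊤) {D : Subgroup G}
    (hD : D.topologicalClosure = ⊤) : ⁅D, D⁆.topologicalClosure = ⊤ := by
  rw [eq_top_iff, ← hG]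
  refine topologicalClosure_minimal _ ?_ (isClosed_topologicalClosure _)
  calc _root_.commutator G = ⁅D.topologicalClosure, D.topologicalClosure⁆ := by rw [hD]; rfl
    _ ≤ ⁅D, D⁆.topologicalClosure := commutator_topologicalClosure_le D D

theorem topologicalClosure_map_derivedSeries_eq_top
    (hG : (_root_.commutator G).topologicalClosure = ⊤) {D : Subgroup G}
    (hD : D.topologicalClosure = ⊤) (n : ℕ) :
    ((derivedSeries D n).map D.subtype).topologicalClosure = ⊤ := by
  induction n with
  | zero => rwa [derivedSeries_zero, ← MonoidHom.range_eq_map, range_subtype]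
  | succ n ih =>
    rw [derivedSeries_succ, map_commutator]
    exact topologicalClosure_commutator_self_eq_top hG ih

theorem subsingleton_of_isSolvable_of_topologicalClosure_eq_top [T1Space G]
    (hG : (_root_.commutator G).topologicalClosure = ⊤) {D : Subgroup G} [Group.IsSolvable D]
    (hD : D.topologicalClosure = ⊤) : Subsingleton G := by
  obtain ⟨n, hn⟩ := Group.IsSolvable.solvable (G := D)
  have hdense := topologicalClosure_map_derivedSeries_eq_top hG hD n
  rw [hn, map_bot] at hdense
  have hbot : (⊥ : Subgroup G).topologicalClosure = ⊥ :=
    le_bot_iff.mp (topologicalClosure_minimal _ le_rfl (by simp))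
  exact subsingleton_iff.mp (subsingleton_of_bot_eq_top (hbot.symm.trans hdense))

end Subgroup

section

variable {G : Type*} [Group G] [TopologicalSpace G] [IsTopologicalGroup G]

theorem MonoidHom.topologicalClosure_commutator_eq_top {G' : Type*} [Group G']
    [TopologicalSpace G'] [IsTopologicalGroup G'] {f : G →* G'} (hf : Continuous f)
    (hsurj : Function.Surjective f) (hG : (commutator G).topologicalClosure = ⊤) :
    (commutator G').topologicalClosure = ⊤ := by
  have hmap : (commutator G).map f = commutator G' := by
    rw [commutator_def, Subgroup.map_commutator, Subgroup.map_top_of_surjective f hsurj,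
      commutator_def]
  rw [← hmap]
  exact hsurj.denseRange.topologicalClosure_map_subgroup hf hG

/-- Both density conditions are equivalent to the density of `H ⊔ N` in `G`. -/
theorem QuotientGroup.topologicalClosure_map_mk'_eq_top_of_map_mk' {H N : Subgroup G} [H.Normal]
    [N.Normal] (h : (H.map (mk' N)).topologicalClosure = ⊤) :
    (N.map (mk' H)).topologicalClosure = ⊤ := by
  have hsup : (H ⊔ N).topologicalClosure = ⊤ := by
    rw [← Subgroup.dense_iff_topologicalClosure_eq_top, ← ker_mk' N,
      ← Subgroup.comap_map_eq, Subgroup.coe_comap, coe_mk', dense_preimage_mk,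
      Subgroup.dense_iff_topologicalClosure_eq_top]
    exact h
  have hmap : (H ⊔ N).map (mk' H) = N.map (mk' H) := by
    rw [Subgroup.map_sup, map_mk'_self, bot_sup_eq]
  rw [← hmap]
  exact (mk'_surjective H).denseRange.topologicalClosure_map_subgroup continuous_quotient_mk' hsup

end

theorem normally_generated_of_quotient_by_solvable_general
    {G : Type*} [Group G] [TopologicalSpace G] [IsTopologicalGroup G]
    (hperf : Dense ((commutator G : Subgroup G) : Set G))
    (N : Subgroup G) [N.Normal] (hNsol : Group.IsSolvable N)
    (hq : ∃ x : G ⧸ N, (Subgroup.normalClosure {x}).topologicalClosure = ⊤) :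
    ∃ g : G, (Subgroup.normalClosure {g}).topologicalClosure = ⊤ := by
  obtain ⟨x, hx⟩ := hq
  obtain ⟨g, rfl⟩ := mk_surjective x
  refine ⟨g, ?_⟩
  set H := (Subgroup.normalClosure {g}).topologicalClosure
  have : H.Normal := Subgroup.is_normal_topologicalClosure _
  have : IsClosed (H : Set G) := Subgroup.isClosed_topologicalClosure _
  have hHN : (H.map (mk' N)).topologicalClosure = ⊤ := by
    rw [eq_top_iff, ← hx]
    refine Subgroup.topologicalClosure_mono ?_
    have hmap := Subgroup.map_normalClosure {g} (mk' N) (mk'_surjective N)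
    rw [Set.image_singleton, coe_mk'] at hmap
    rw [← hmap]
    exact Subgroup.map_mono (Subgroup.le_topologicalClosure _)
  have hNH := topologicalClosure_map_mk'_eq_top_of_map_mk' hHN
  have hperfQ := (mk' H).topologicalClosure_commutator_eq_top continuous_quotient_mk'
    (mk'_surjective H) (Subgroup.dense_iff_topologicalClosure_eq_top.mp hperf)
  have : Group.IsSolvable (N.map (mk' H)) :=
    Group.isSolvable_of_surjective ((mk' H).subgroupMap_surjective N)
  exact QuotientGroup.subsingleton_iff.mp
    (Subgroup.subsingleton_of_isSolvable_of_topologicalClosure_eq_top hperfQ hNH)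

theorem normally_generated_of_quotient_by_solvable
    {G : Type*} [Group G] [TopologicalSpace G] [IsTopologicalGroup G]
    (hperf : Dense ((commutator G : Subgroup G) : Set G))
    (N : Subgroup G) [N.Normal] (hNc : IsClosed (N : Set G)) (hNsol : Group.IsSolvable N)
    (hq : ∃ x : G ⧸ N, (Subgroup.normalClosure {x}).topologicalClosure = ⊤) :
    ∃ g : G, (Subgroup.normalClosure {g}).topologicalClosure = ⊤ :=
  normally_generated_of_quotient_by_solvable_general hperf N hNsol hq
end

section
/- Let H = ∏_{i∈I} S_i be a direct product of non-abelian topologically simple topological groups, with the product topology. Then every closed normal subgroup of H is of the form ∏_{i∈J} S_i for some subset J ⊆ I. -/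
/-!
The center of a non-abelian topologically simple group is a proper closed normal subgroup, hence
trivial. So if some `x ∈ N` has `x i ≠ 1`, there is `a` with `⁅a, x i⁆ ≠ 1`, and
`⁅Pi.mulSingle i a, x⁆ = Pi.mulSingle i ⁅a, x i⁆` is a nontrivial element of `N` supported
at `i`. The preimage of `N` under `Pi.mulSingle i` is then a nontrivial closed normal subgroup of
`S i`, hence all of `S i`. Therefore `N` contains every finitely supported element whose support
avoids the coordinates where `N` is trivial, and these are dense in `Subgroup.pi Jᶜ ⊥`.
-/

open Filter Topology
open scoped commutatorElement

lemma Subgroup.isClosed_center (G : Type*) [Group G] [TopologicalSpace G]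
    [SeparatelyContinuousMul G] [T2Space G] : IsClosed (Subgroup.center G : Set G) := by
  rw [Subgroup.coe_center, ← Set.centralizer_univ]
  exact Set.isClosed_centralizer _

lemma Subgroup.center_eq_bot_of_isTopologicallySimple {G : Type*} [Group G] [TopologicalSpace G]
    [SeparatelyContinuousMul G] [T2Space G]
    (hsimple : ∀ N : Subgroup G, N.Normal → IsClosed (N : Set G) → N = ⊥ ∨ N = ⊤)
    (hnonab : ∃ a b : G, a * b ≠ b * a) : Subgroup.center G = ⊥ := by
  refine (hsimple _ inferInstance (Subgroup.isClosed_center G)).resolve_right fun htop => ?_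
  obtain ⟨a, b, hab⟩ := hnonab
  have ha : a ∈ Subgroup.center G := htop ▸ Subgroup.mem_top a
  exact hab (Subgroup.mem_center_iff.mp ha b).symm

lemma Subgroup.Normal.commutatorElement_mem {G : Type*} [Group G] {N : Subgroup G}
    (hN : N.Normal) (g : G) {x : G} (hx : x ∈ N) : ⁅g, x⁆ ∈ N := by
  rw [commutatorElement_def]
  exact N.mul_mem (hN.conj_mem x hx g) (N.inv_mem hx)

lemma Pi.commutatorElement_mulSingle {ι : Type*} [DecidableEq ι] {G : ι → Type*}
    [∀ i, Group (G i)] (i : ι) (a : G i) (x : ∀ i, G i) :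
    ⁅Pi.mulSingle i a, x⁆ = Pi.mulSingle i ⁅a, x i⁆ := by
  funext j
  by_cases hj : j = i
  · subst hj
    simp only [commutatorElement_def, Pi.mul_apply, Pi.inv_apply, Pi.mulSingle_eq_same]
  · simp [commutatorElement_def, Pi.mulSingle_eq_of_ne hj]

lemma Subgroup.comap_mulSingle_ne_bot {ι : Type*} [DecidableEq ι] {G : ι → Type*}
    [∀ i, Group (G i)] {N : Subgroup (∀ i, G i)} (hN : N.Normal) {i : ι}
    (hcenter : Subgroup.center (G i) = ⊥) {x : ∀ i, G i} (hx : x ∈ N) (hxi : x i ≠ 1) :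
    N.comap (MonoidHom.mulSingle G i) ≠ ⊥ := by
  have hxi_center : x i ∉ Subgroup.center (G i) := by
    rwa [hcenter, Subgroup.mem_bot]
  obtain ⟨a, ha⟩ : ∃ a : G i, a * x i ≠ x i * a := by
    simpa [Subgroup.mem_center_iff] using hxi_center
  have hmem : ⁅a, x i⁆ ∈ N.comap (MonoidHom.mulSingle G i) := by
    rw [Subgroup.mem_comap, MonoidHom.mulSingle_apply, ← Pi.commutatorElement_mulSingle]
    exact hN.commutatorElement_mem _ hx
  intro hbot
  rw [hbot, Subgroup.mem_bot, commutatorElement_eq_one_iff_mul_comm] at hmem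
  exact ha hmem

lemma Finset.tendsto_piecewise_atTop {ι : Type*} [DecidableEq ι] {X : ι → Type*}
    [∀ i, TopologicalSpace (X i)] (f g : ∀ i, X i) :
    Tendsto (fun s : Finset ι => s.piecewise f g) atTop (𝓝 f) := by
  rw [tendsto_pi_nhds]
  intro i
  refine tendsto_const_nhds.congr' ?_
  filter_upwards [eventually_ge_atTop {i}] with s hs
  exact (s.piecewise_eq_of_mem f g (hs (Finset.mem_singleton_self i))).symm

lemma Submonoid.piecewise_one_mem {ι : Type*} [DecidableEq ι] {M : ι → Type*}
    [∀ i, Monoid (M i)] (N : Submonoid (∀ i, M i)) {x : ∀ i, M i}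
    (hx : ∀ i, Pi.mulSingle i (x i) ∈ N) (s : Finset ι) : s.piecewise x 1 ∈ N := by
  induction s using Finset.induction_on with
  | empty => simp [N.one_mem]
  | insert j s hj ih =>
    have hsplit : (insert j s).piecewise x 1 = Pi.mulSingle j (x j) * s.piecewise x 1 := by
      funext k
      by_cases hk : k = j
      · subst hk
        simp [hj]
      · simp [hk]
    rw [hsplit]
    exact N.mul_mem (hx j) ih

lemma Submonoid.mem_of_forall_mulSingle_mem {ι : Type*} [DecidableEq ι] {M : ι → Type*}
    [∀ i, Monoid (M i)] [∀ i, TopologicalSpace (M i)] (N : Submonoid (∀ i, M i))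
    (hNc : IsClosed (N : Set (∀ i, M i))) {x : ∀ i, M i}
    (hx : ∀ i, Pi.mulSingle i (x i) ∈ N) : x ∈ N :=
  hNc.mem_of_tendsto (Finset.tendsto_piecewise_atTop x 1)
    (Eventually.of_forall (N.piecewise_one_mem hx))

theorem closed_normal_subgroup_of_product_of_simple
    {ι : Type*} {S : ι → Type*} [∀ i, Group (S i)] [∀ i, TopologicalSpace (S i)]
    [∀ i, IsTopologicalGroup (S i)] [∀ i, T2Space (S i)]
    (hsimple : ∀ i (N : Subgroup (S i)), N.Normal → IsClosed (N : Set (S i)) →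
      N = ⊥ ∨ N = ⊤)
    (hnonab : ∀ i, ∃ a b : S i, a * b ≠ b * a)
    (N : Subgroup (∀ i, S i)) (hN : N.Normal) (hNc : IsClosed (N : Set (∀ i, S i))) :
    ∃ J : Set ι, N = Subgroup.pi Jᶜ (fun _ => ⊥) := by
  classical
  refine ⟨{i | ∃ x ∈ N, x i ≠ 1}, le_antisymm (fun x hx i hi => ?_) (fun x hx => ?_)⟩
  · exact Subgroup.mem_bot.mpr (not_not.mp fun hxi => hi ⟨x, hx, hxi⟩)
  refine N.toSubmonoid.mem_of_forall_mulSingle_mem hNc fun i => ?_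
  by_cases hi : ∃ y ∈ N, y i ≠ 1
  · obtain ⟨y, hy, hyi⟩ := hi
    have hcenter := Subgroup.center_eq_bot_of_isTopologicallySimple (hsimple i) (hnonab i)
    have hclosed : IsClosed (N.comap (MonoidHom.mulSingle S i) : Set (S i)) :=
      hNc.preimage (continuous_mulSingle i)
    have htop := (hsimple i _ (hN.comap _) hclosed).resolve_left
      (Subgroup.comap_mulSingle_ne_bot hN hcenter hy hyi)
    exact Subgroup.mem_comap.mp (htop ▸ Subgroup.mem_top (x i))
  · rw [Subgroup.mem_bot.mp (hx i hi), Pi.mulSingle_one]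
    exact N.one_mem
end

section
/- Let H = ∏_{i∈I} S_i be a product of non-abelian topologically simple topological groups and let h ∈ H have non-trivial component in every coordinate. Then H is topologically normally generated by h: the smallest closed normal subgroup of H containing h is H itself. -/
/-!
The closure `N` of the normal closure of `h` is a closed normal subgroup, so its trace
`N ∩ S i` on each factor is closed and normal in `S i`. It contains the commutators
`⁅x, h i⁆`, so if it were trivial then `h i` would be central; but the centre of `S i` is closed
(Hausdorff) and normal, and proper (non-abelian), hence trivial. So `N` contains every factor,
hence every finitely supported element, and these are dense in the product.
-/

open Filter Topology
open scoped commutatorElement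

def IsTopologicallySimpleGroup (G : Type*) [Group G] [TopologicalSpace G] : Prop :=
  ∀ N : Subgroup G, N.Normal → IsClosed (N : Set G) → N = ⊥ ∨ N = ⊤

section Simple

variable {G : Type*} [Group G] [TopologicalSpace G] [IsTopologicalGroup G] [T2Space G]

theorem Subgroup.isClosed_center_s10 : IsClosed (Subgroup.center G : Set G) := by
  rw [Subgroup.coe_center, ← Set.centralizer_univ]
  exact Set.isClosed_centralizer _

theorem IsTopologicallySimpleGroup.center_eq_bot (hG : IsTopologicallySimpleGroup G)
    (hnonab : ∃ a b : G, a * b ≠ b * a) : Subgroup.center G = ⊥ := by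
  refine (hG _ inferInstance Subgroup.isClosed_center_s10).resolve_right fun htop => ?_
  obtain ⟨a, b, hab⟩ := hnonab
  exact hab (Subgroup.mem_center_iff.mp (htop ▸ Subgroup.mem_top a) b).symm

theorem IsTopologicallySimpleGroup.eq_top_of_commutatorElement_mem
    (hG : IsTopologicallySimpleGroup G) (hnonab : ∃ a b : G, a * b ≠ b * a)
    {g : G} (hg : g ≠ 1) {K : Subgroup G} (hK : K.Normal) (hKc : IsClosed (K : Set G))
    (hcomm : ∀ x : G, ⁅x, g⁆ ∈ K) : K = ⊤ := by
  refine (hG K hK hKc).resolve_left fun hbot => hg ?_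
  have hcenter : g ∈ Subgroup.center G := Subgroup.mem_center_iff.mpr fun x =>
    commutatorElement_eq_one_iff_mul_comm.mp <| Subgroup.mem_bot.mp (hbot ▸ hcomm x)
  rwa [hG.center_eq_bot hnonab, Subgroup.mem_bot] at hcenter

end Simple

section Pi

variable {ι : Type*} [DecidableEq ι] {S : ι → Type*}

theorem Finset.tendsto_piecewise_atTop_s10 [∀ i, One (S i)] [∀ i, TopologicalSpace (S i)]
    (x : ∀ i, S i) : Tendsto (fun F : Finset ι => F.piecewise x 1) atTop (𝓝 x) :=
  tendsto_pi_nhds.2 fun i => tendsto_nhds_of_eventually_eq <|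
    (eventually_ge_atTop {i}).mono fun F hF =>
      F.piecewise_eq_of_mem _ _ (hF (mem_singleton_self i))

variable [∀ i, Group (S i)]

theorem Pi.mulSingle_commutatorElement (i : ι) (x : S i) (h : ∀ i, S i) :
    ⁅Pi.mulSingle i x, h⁆ = Pi.mulSingle i ⁅x, h i⁆ := by
  ext j
  obtain rfl | hj := eq_or_ne j i <;> simp [commutatorElement_def, *]

theorem Subgroup.piecewise_mem_of_mulSingle_mem {H : Subgroup (∀ i, S i)}
    (hH : ∀ i s, Pi.mulSingle i s ∈ H) (x : ∀ i, S i) (F : Finset ι) :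
    F.piecewise x 1 ∈ H := by
  induction F using Finset.induction with
  | empty => simp [H.one_mem]
  | @insert j F hj ih =>
    convert mul_mem (hH j (x j)) ih using 1
    ext i
    obtain rfl | hi := eq_or_ne i j <;> simp [*]

theorem Subgroup.eq_top_of_isClosed_of_mulSingle_mem [∀ i, TopologicalSpace (S i)]
    {H : Subgroup (∀ i, S i)} (hHc : IsClosed (H : Set (∀ i, S i)))
    (hH : ∀ i s, Pi.mulSingle i s ∈ H) : H = ⊤ :=
  eq_top_iff.2 fun x _ => hHc.mem_of_tendsto (Finset.tendsto_piecewise_atTop_s10 x)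
    (.of_forall (piecewise_mem_of_mulSingle_mem hH x))

end Pi

theorem product_of_simple_normally_generated
    {ι : Type*} {S : ι → Type*} [∀ i, Group (S i)] [∀ i, TopologicalSpace (S i)]
    [∀ i, IsTopologicalGroup (S i)] [∀ i, T2Space (S i)]
    (hsimple : ∀ i (N : Subgroup (S i)), N.Normal → IsClosed (N : Set (S i)) →
      N = ⊥ ∨ N = ⊤)
    (hnonab : ∀ i, ∃ a b : S i, a * b ≠ b * a)
    (h : ∀ i, S i) (hh : ∀ i, h i ≠ 1) :
    (Subgroup.normalClosure {h}).topologicalClosure = ⊤ := by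
  classical
  set N := (Subgroup.normalClosure {h}).topologicalClosure
  have hN : N.Normal := Subgroup.is_normal_topologicalClosure _
  have hNc : IsClosed (N : Set (∀ i, S i)) := Subgroup.isClosed_topologicalClosure _
  have hhN : h ∈ N := Subgroup.le_topologicalClosure _ (Subgroup.subset_normalClosure rfl)
  refine Subgroup.eq_top_of_isClosed_of_mulSingle_mem hNc fun i s => ?_
  have hcomm (x : S i) : ⁅x, h i⁆ ∈ N.comap (MonoidHom.mulSingle S i) := by
    rw [Subgroup.mem_comap, MonoidHom.mulSingle_apply, ← Pi.mulSingle_commutatorElement,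
      commutatorElement_def]
    exact mul_mem (hN.conj_mem h hhN _) (inv_mem hhN)
  have hK := IsTopologicallySimpleGroup.eq_top_of_commutatorElement_mem (hsimple i) (hnonab i)
    (hh i) (hN.comap (MonoidHom.mulSingle S i)) (hNc.preimage (continuous_mulSingle i)) hcomm
  exact Subgroup.mem_comap.mp (hK ▸ Subgroup.mem_top s)
end

section
/- Let S be a non-abelian finite simple group, c ∈ S an element of order 2, F = S × S × S, and K ≤ F the subgroup generated by (1,c,c) and (c,c,1). Then F is normally generated by K, i.e. the smallest normal subgroup of F containing K is F itself. -/
/-! Conjugating `(c, c, 1)` by `(g, 1, 1)` and dividing by `(c, c, 1)` gives `(⁅g, c⁆, 1, 1)`, so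
the normal closure `N` meets the first factor in a normal subgroup of `S` containing every
commutator `⁅g, c⁆`. As `c ≠ 1` is not central in the non-abelian simple group `S`, that subgroup
is all of `S`. The same argument with `(1, c, c)` yields the second and third factors. -/

open Subgroup
open scoped commutatorElement

theorem IsSimpleGroup.center_eq_bot {G : Type*} [Group G] [IsSimpleGroup G]
    (hnonab : ∃ a b : G, a * b ≠ b * a) : center G = ⊥ :=
  (center G).normal_of_characteristic.eq_bot_or_eq_top.resolve_right fun htop => by
    obtain ⟨a, b, hab⟩ := hnonab
    exact hab (mem_center_iff.mp (htop ▸ mem_top b) a)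

namespace Subgroup.Normal

variable {G H : Type*} [Group G] [Group H]

theorem eq_top_of_commutatorElement_mem [IsSimpleGroup G] {N : Subgroup G} (hN : N.Normal)
    {a : G} (ha : a ∉ center G) (hcomm : ∀ g : G, ⁅g, a⁆ ∈ N) : N = ⊤ :=
  hN.eq_bot_or_eq_top.resolve_left fun hbot => ha <| mem_center_iff.mpr fun g => by
    simpa [hbot, commutatorElement_eq_one_iff_mul_comm] using hcomm g

theorem mk_commutatorElement_one_mem {N : Subgroup (G × H)} (hN : N.Normal) {a : G} {h : H}
    (hmem : (a, h) ∈ N) (g : G) : (⁅g, a⁆, (1 : H)) ∈ N := by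
  simpa [commutatorElement_def, mul_assoc] using
    mul_mem (hN.conj_mem _ hmem (g, 1)) (inv_mem hmem)

theorem mk_one_mem_of_mk_mem [IsSimpleGroup G] {N : Subgroup (G × H)} (hN : N.Normal)
    {a : G} {h : H} (ha : a ∉ center G) (hmem : (a, h) ∈ N) (g : G) : (g, (1 : H)) ∈ N := by
  have hinl : N.comap (MonoidHom.inl G H) = ⊤ :=
    (hN.comap _).eq_top_of_commutatorElement_mem ha (hN.mk_commutatorElement_one_mem hmem)
  exact (mem_comap (f := MonoidHom.inl G H)).mp (hinl ▸ mem_top g)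

theorem one_mk_mem_of_mk_mem [IsSimpleGroup H] {N : Subgroup (G × H)} (hN : N.Normal)
    {g : G} {a : H} (ha : a ∉ center H) (hmem : (g, a) ∈ N) (h : H) : ((1 : G), h) ∈ N :=
  (hN.comap (MulEquiv.prodComm : H × G ≃* G × H).toMonoidHom).mk_one_mem_of_mk_mem ha hmem h

end Subgroup.Normal

theorem normal_closure_klein_eq_top_general
    {S : Type*} [Group S] [IsSimpleGroup S]
    (hnonab : ∃ a b : S, a * b ≠ b * a)
    (c : S) (hc : orderOf c = 2) :
    Subgroup.normalClosure
      ((Subgroup.closure {((1 : S), c, c), (c, c, (1 : S))} : Subgroup (S × S × S)) :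
        Set (S × S × S)) = ⊤ := by
  set N := normalClosure ((closure {((1 : S), c, c), (c, c, (1 : S))} : Subgroup (S × S × S)) :
    Set (S × S × S))
  have hN : N.Normal := normalClosure_normal
  have hN₂₃ : (N.comap (MonoidHom.inr S (S × S))).Normal := hN.comap _
  have hc_center : c ∉ center S := by
    rw [IsSimpleGroup.center_eq_bot hnonab, mem_bot]
    rintro rfl
    simp at hc
  have h₁₂ : (c, c, (1 : S)) ∈ N := subset_normalClosure (subset_closure (by simp))
  have h₂₃ : ((1 : S), c, c) ∈ N := subset_normalClosure (subset_closure (by simp))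
  refine eq_top_iff.mpr fun ⟨x, y, z⟩ _ => ?_
  have hx : (x, (1 : S × S)) ∈ N := hN.mk_one_mem_of_mk_mem hc_center h₁₂ x
  have hy : ((1 : S), y, (1 : S)) ∈ N := hN₂₃.mk_one_mem_of_mk_mem hc_center h₂₃ y
  have hz : ((1 : S), (1 : S), z) ∈ N := hN₂₃.one_mk_mem_of_mk_mem hc_center h₂₃ z
  simpa using mul_mem (mul_mem hx hy) hz

theorem normal_closure_klein_eq_top
    {S : Type*} [Group S] [Finite S] [IsSimpleGroup S]
    (hnonab : ∃ a b : S, a * b ≠ b * a)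
    (c : S) (hc : orderOf c = 2) :
    Subgroup.normalClosure
      ((Subgroup.closure {((1 : S), c, c), (c, c, (1 : S))} : Subgroup (S × S × S)) :
        Set (S × S × S)) = ⊤ :=
  normal_closure_klein_eq_top_general hnonab c hc
end

section
/- Let G be a topological group, G⁺ the intersection of all open normal subgroups of G (the discrete residual). If G⁺ is cocompact in G and M₁,…,M_k are closed normal subgroups none of which contains G⁺, and g ∈ G, then the coset gG⁺ is not contained in M₁ ∪ ⋯ ∪ M_k, provided G⁺ has no non-trivial discrete quotient (no proper open normal subgroup). -/
open Pointwise Topology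

/-
Proof idea: `G⁺` is an intersection of open, hence closed, subgroups, so it is closed in the
locally compact group `G` and is therefore a Baire space. If `gG⁺ ⊆ M₁ ∪ ⋯ ∪ Mₖ`, then `G⁺` is
the finite union of the closed sets `{x ∈ G⁺ | g x ∈ Mᵢ}`, one of which has non-empty interior.
That set lies in a single coset of `Mᵢ ∩ G⁺`, so `Mᵢ ∩ G⁺` is an open normal subgroup of `G⁺`;
as `G⁺` has no proper one, `G⁺ ≤ Mᵢ`.
-/

namespace Subgroup

variable {G : Type*} [Group G] [TopologicalSpace G]

theorem isClosed_sInf {S : Set (Subgroup G)} (hS : ∀ U ∈ S, IsClosed (U : Set G)) :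
    IsClosed ((sInf S : Subgroup G) : Set G) := by
  rw [coe_sInf]
  exact isClosed_biInter hS

variable [IsTopologicalGroup G]

theorem isOpen_of_smul_mem_nhds (H : Subgroup G) {a x : G} (h : a • (H : Set G) ∈ 𝓝 x) :
    IsOpen (H : Set G) :=
  H.isOpen_of_mem_nhds (g := a⁻¹ • x) <| (smul_mem_nhds_smul_iff a).1 <| by simpa using h

theorem isOpen_subgroupOf_of_nonempty_interior (K N : Subgroup G) {g : G}
    (h : (interior {x : K | g * x ∈ N}).Nonempty) : IsOpen (N.subgroupOf K : Set K) := by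
  obtain ⟨x₀, hx₀⟩ := h
  have hx₀N : g * (x₀ : G) ∈ N := interior_subset (s := {x : K | g * x ∈ N}) hx₀
  refine (N.subgroupOf K).isOpen_of_smul_mem_nhds (a := x₀) (x := x₀) ?_
  refine Filter.mem_of_superset (isOpen_interior.mem_nhds hx₀) fun y hy ↦ ?_
  have hyN : g * (y : G) ∈ N := interior_subset (s := {x : K | g * x ∈ N}) hy
  refine ⟨x₀⁻¹ * y, ?_, mul_inv_cancel_left x₀ y⟩
  have : (g * (x₀ : G))⁻¹ * (g * y) ∈ N := N.mul_mem (N.inv_mem hx₀N) hyN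
  simpa [mem_subgroupOf, mul_assoc] using this

theorem exists_isOpen_subgroupOf_of_smul_subset_iUnion {ι : Type*} [Countable ι]
    (K : Subgroup G) [BaireSpace K] (N : ι → Subgroup G) (hN : ∀ i, IsClosed (N i : Set G))
    {g : G} (hg : g • (K : Set G) ⊆ ⋃ i, (N i : Set G)) :
    ∃ i, IsOpen ((N i).subgroupOf K : Set K) := by
  have hcover : ⋃ i, {x : K | g * x ∈ N i} = Set.univ :=
    Set.eq_univ_of_forall fun x ↦ by simpa using hg ⟨x, x.2, rfl⟩
  have hclosed (i : ι) : IsClosed {x : K | g * x ∈ N i} :=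
    (hN i).preimage (continuous_const.mul continuous_subtype_val)
  obtain ⟨i, hi⟩ := nonempty_interior_of_iUnion_of_closed hclosed hcover
  exact ⟨i, isOpen_subgroupOf_of_nonempty_interior K (N i) hi⟩

end Subgroup

theorem coset_not_subset_union_of_discrete_residual_general
    {G : Type*} [Group G] [TopologicalSpace G] [IsTopologicalGroup G]
    [LocallyCompactSpace G]
    (Gplus : Subgroup G)
    (hGplus : Gplus = sInf {U : Subgroup G | U.Normal ∧ IsOpen (U : Set G)})
    (hnodisc : ∀ V : Subgroup Gplus, V.Normal → IsOpen (V : Set Gplus) → V = ⊤)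
    {k : ℕ} (M : Fin k → Subgroup G)
    (hMnormal : ∀ i, (M i).Normal) (hMclosed : ∀ i, IsClosed ((M i) : Set G))
    (hMne : ∀ i, ¬ Gplus ≤ M i) (g : G) :
    ¬ (g • (Gplus : Set G) ⊆ ⋃ i, ((M i) : Set G)) := by
  intro hsub
  have hGclosed : IsClosed (Gplus : Set G) :=
    hGplus ▸ Subgroup.isClosed_sInf fun U hU ↦ U.isClosed_of_isOpen (G := G) hU.2
  have : LocallyCompactSpace Gplus := hGclosed.locallyCompactSpace
  obtain ⟨i, hopen⟩ :=
    Gplus.exists_isOpen_subgroupOf_of_smul_subset_iUnion M hMclosed hsub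
  have htop := hnodisc _ ((hMnormal i).subgroupOf Gplus) hopen
  exact hMne i (Subgroup.subgroupOf_eq_top.1 htop)

theorem coset_not_subset_union_of_discrete_residual
    {G : Type*} [Group G] [TopologicalSpace G] [IsTopologicalGroup G]
    [LocallyCompactSpace G]
    (Gplus : Subgroup G)
    (hGplus : Gplus = sInf {U : Subgroup G | U.Normal ∧ IsOpen (U : Set G)})
    (hcocompact : CompactSpace (G ⧸ Gplus))
    (hnodisc : ∀ V : Subgroup Gplus, V.Normal → IsOpen (V : Set Gplus) → V = ⊤)
    {k : ℕ} (M : Fin k → Subgroup G)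
    (hMnormal : ∀ i, (M i).Normal) (hMclosed : ∀ i, IsClosed ((M i) : Set G))
    (hMne : ∀ i, ¬ Gplus ≤ M i) (g : G) :
    ¬ (g • (Gplus : Set G) ⊆ ⋃ i, ((M i) : Set G)) :=
  coset_not_subset_union_of_discrete_residual_general Gplus hGplus hnodisc M hMnormal hMclosed hMne
    g
end
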